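/- arXiv:1307.5931 — 3 statements merged into one kernel-verified Lean document; each statement's English description precedes it below -/
import Mathlib

section
/- For each i with 1 ≤ i ≤ k, writing the coefficient ξ_i of g(λ) as a polynomial F^{(i)}(ψ_1,...,ψ_i) in the power sums ψ_t = Σ_j n_j^t, the polynomial F^{(i)} depends linearly on ψ_i with a nonzero constant coefficient c_i; i.e., F^{(i)}(y_1,...,y_i) = c_i y_i + G^{(i)}(y_1,...,y_{i-1}) for some nonzero constant c_i. -/
/-!
With `P = ∏ⱼ (λ - aⱼ)`, `aⱼ = nⱼ - 2`, one has `g = (k + 1) P - (λ + 2) P'`, so Vieta gives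
`ξᵢ = (-1)ⁱ ((i + 1) eᵢ(a) + 2 (k - i + 1) eᵢ₋₁(a))`. By Newton's identities
`eᵢ(a) = (-1)ⁱ⁻¹/i · pᵢ(a) + (a polynomial in p₁(a), …, pᵢ₋₁(a))`, and by the binomial theorem
`pₜ(a) - ψₜ` is a polynomial in `ψ₁, …, ψₜ₋₁`. Hence `ξᵢ = -(i + 1)/i · ψᵢ + G(ψ₁, …, ψᵢ₋₁)`.
-/

open Polynomial Finset

/-- The polynomial `g(λ) = ∏ (λ - nᵢ + 2) - Σ nᵢ ∏_{j≠i} (λ - nⱼ + 2)`. -/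
noncomputable def gPoly {k : ℕ} (n : Fin k → ℝ) : Polynomial ℝ :=
  ∏ i, (X - C (n i - 2)) - ∑ i, C (n i) * ∏ j ∈ univ.erase i, (X - C (n j - 2))

namespace MvPolynomial

section Shift

variable {σ R : Type*} [CommRing R]

noncomputable def shift (s : R) : MvPolynomial σ R →ₐ[R] MvPolynomial σ R :=
  aeval fun j => X j - C s

theorem eval_shift (s : R) (n : σ → R) (p : MvPolynomial σ R) :
    eval n (shift s p) = eval (fun j => n j - s) p := by
  rw [shift, ← coe_aeval_eq_eval, ← coe_aeval_eq_eval]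
  exact (comp_aeval_apply _ (aeval n) p).trans (by simp)

end Shift

variable (σ : Type*) [Fintype σ] (R : Type*) [CommRing R]

noncomputable def psumAdjoin (d : ℕ) : Subalgebra R (MvPolynomial σ R) :=
  Algebra.adjoin R (Set.range fun t : Fin d => psum σ R (t + 1))

variable {σ R}

theorem psumAdjoin_mono {d d' : ℕ} (h : d ≤ d') : psumAdjoin σ R d ≤ psumAdjoin σ R d' :=
  Algebra.adjoin_mono <| by
    rintro _ ⟨t, rfl⟩
    exact ⟨Fin.castLE h t, rfl⟩

theorem psum_mem_psumAdjoin {t d : ℕ} (h : t ≤ d) : psum σ R t ∈ psumAdjoin σ R d := by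
  rcases t with _ | t
  · rw [psum_zero]
    exact Subalgebra.natCast_mem _ _
  · exact Algebra.subset_adjoin ⟨⟨t, h⟩, rfl⟩

theorem exists_eval_eq_of_mem_psumAdjoin {d : ℕ} {p : MvPolynomial σ R}
    (hp : p ∈ psumAdjoin σ R d) :
    ∃ G : MvPolynomial (Fin d) R, ∀ n : σ → R,
      eval n p = eval (fun t : Fin d => ∑ j, n j ^ (t.val + 1)) G := by
  rw [psumAdjoin, Algebra.adjoin_range_eq_range_aeval] at hp
  obtain ⟨G, rfl⟩ := hp
  refine ⟨G, fun n => ?_⟩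
  rw [← coe_aeval_eq_eval, ← coe_aeval_eq_eval]
  exact (comp_aeval_apply _ (aeval n) G).trans (by simp [psum])

theorem sum_esymm_mul_psum_mem_psumAdjoin {d : ℕ}
    (h : ∀ a ≤ d, esymm σ R a ∈ psumAdjoin σ R d) :
    ∑ a ∈ antidiagonal (d + 1) with a.1 ∈ Set.Ioo 0 (d + 1),
      (-1) ^ a.1 * esymm σ R a.1 * psum σ R a.2 ∈ psumAdjoin σ R d := by
  refine Subalgebra.sum_mem _ fun a ha => ?_
  simp only [mem_filter, HasAntidiagonal.mem_antidiagonal, Set.mem_Ioo] at ha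
  refine Subalgebra.mul_mem _ (Subalgebra.mul_mem _ ?_ (h _ (by omega)))
    (psum_mem_psumAdjoin (by omega))
  exact Subalgebra.pow_mem _ (neg_mem (Subalgebra.one_mem _)) _

section Field

variable {K : Type*} [Field K] [CharZero K]

theorem esymm_succ_eq_smul (d : ℕ) :
    esymm σ K (d + 1) = ((-1) ^ d / (d + 1) : K) • (psum σ K (d + 1) +
      ∑ a ∈ antidiagonal (d + 1) with a.1 ∈ Set.Ioo 0 (d + 1),
        (-1) ^ a.1 * esymm σ K a.1 * psum σ K a.2) := by
  rw [psum_eq_mul_esymm_sub_sum σ K (d + 1) d.succ_pos, sub_add_cancel, smul_eq_C_mul,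
    ← mul_assoc, ← mul_assoc]
  convert (one_mul (esymm σ K (d + 1))).symm
  rw [← map_natCast C, ← map_one C, ← map_neg C, ← map_pow, ← map_mul, ← map_mul]
  congr 1
  have hsq : ((-1 : K) ^ d) ^ 2 = 1 := by rw [← pow_mul, mul_comm, pow_mul, neg_one_sq, one_pow]
  field_simp
  push_cast
  linear_combination ((d : K) + 1) * hsq

theorem esymm_mem_psumAdjoin (d : ℕ) : esymm σ K d ∈ psumAdjoin σ K d := by
  induction d using Nat.strong_induction_on with
  | _ d ih =>
    rcases d with _ | d
    · simp [esymm_zero]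
    · rw [esymm_succ_eq_smul]
      refine Subalgebra.smul_mem _ (add_mem (psum_mem_psumAdjoin le_rfl) ?_) _
      exact psumAdjoin_mono d.le_succ <| sum_esymm_mul_psum_mem_psumAdjoin fun a ha =>
        psumAdjoin_mono ha (ih a (by omega))

theorem esymm_succ_sub_smul_psum_mem (d : ℕ) :
    esymm σ K (d + 1) - ((-1) ^ d / (d + 1) : K) • psum σ K (d + 1) ∈ psumAdjoin σ K d := by
  rw [esymm_succ_eq_smul, smul_add, add_sub_cancel_left]
  exact Subalgebra.smul_mem _ (sum_esymm_mul_psum_mem_psumAdjoin fun a ha =>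
    psumAdjoin_mono ha (esymm_mem_psumAdjoin a)) _

end Field

theorem shift_psum_succ (s : R) (d : ℕ) :
    shift s (psum σ R (d + 1)) =
      ∑ u ∈ range (d + 1), C ((-s) ^ (d + 1 - u) * (d + 1).choose u) * psum σ R u +
        psum σ R (d + 1) := by
  simp only [shift, psum, map_sum, map_pow, aeval_X, sub_eq_add_neg, add_pow,
    sum_range_succ _ (d + 1)]
  simp only [Finset.mul_sum, sum_add_distrib]
  rw [sum_comm]
  simp [mul_comm, mul_left_comm]

theorem shift_psum_succ_sub_mem (s : R) (d : ℕ) :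
    shift s (psum σ R (d + 1)) - psum σ R (d + 1) ∈ psumAdjoin σ R d := by
  rw [shift_psum_succ, add_sub_cancel_right]
  refine Subalgebra.sum_mem _ fun u hu => Subalgebra.mul_mem _ (Subalgebra.algebraMap_mem _ _) ?_
  exact psum_mem_psumAdjoin (Nat.lt_succ_iff.mp (mem_range.mp hu))

theorem shift_mem_psumAdjoin (s : R) {d : ℕ} {p : MvPolynomial σ R}
    (hp : p ∈ psumAdjoin σ R d) : shift s p ∈ psumAdjoin σ R d := by
  suffices (psumAdjoin σ R d).map (shift s) ≤ psumAdjoin σ R d from this ⟨p, hp, rfl⟩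
  rw [psumAdjoin, AlgHom.map_adjoin, Algebra.adjoin_le_iff]
  rintro _ ⟨_, ⟨t, rfl⟩, rfl⟩
  have ht : (t : ℕ) + 1 ≤ d := t.isLt
  rw [← sub_add_cancel (shift s _) (psum σ R (t + 1))]
  exact add_mem (psumAdjoin_mono (by omega) (shift_psum_succ_sub_mem s t))
    (psum_mem_psumAdjoin ht)

theorem shift_esymm_succ_sub_smul_psum_mem {K : Type*} [Field K] [CharZero K] (s : K)
    (d : ℕ) : shift s (esymm σ K (d + 1)) - ((-1) ^ d / (d + 1) : K) • psum σ K (d + 1) ∈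
      psumAdjoin σ K d := by
  have h := add_mem (shift_mem_psumAdjoin s (esymm_succ_sub_smul_psum_mem (σ := σ) d))
    (Subalgebra.smul_mem _ (shift_psum_succ_sub_mem s d) ((-1) ^ d / (d + 1) : K))
  rw [map_sub, map_smul, smul_sub] at h
  convert h using 1
  abel

end MvPolynomial

namespace Polynomial

variable {R : Type*} [CommRing R] {ι : Type*} [Fintype ι]

theorem sum_C_add_mul_prod_erase [DecidableEq ι] (a : ι → R) (c : R) :
    ∑ i, C (a i + c) * ∏ j ∈ univ.erase i, (X - C (a j)) =
      (X + C c) * derivative (∏ i, (X - C (a i))) - Fintype.card ι • ∏ i, (X - C (a i)) := by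
  have hterm : ∀ i, C (a i + c) * ∏ j ∈ univ.erase i, (X - C (a j)) =
      (X + C c) * ∏ j ∈ univ.erase i, (X - C (a j)) - ∏ j, (X - C (a j)) := fun i => by
    rw [← mul_prod_erase univ (fun j => X - C (a j)) (mem_univ i), C_add]
    ring
  rw [sum_congr rfl fun i _ => hterm i, sum_sub_distrib, ← mul_sum, derivative_prod_finset]
  simp

theorem coeff_X_add_C_mul_derivative (p : R[X]) (c : R) (m : ℕ) :
    ((X + C c) * derivative p).coeff m = m * p.coeff m + c * ((m + 1) * p.coeff (m + 1)) := by
  rw [add_mul, coeff_add, coeff_C_mul, coeff_derivative]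
  rcases m with _ | m
  · simp
  · rw [coeff_X_mul, coeff_derivative]
    push_cast
    ring

theorem coeff_prod_X_sub_C {d : ℕ} (a : ι → R) (hd : d ≤ Fintype.card ι) :
    (∏ i, (X - C (a i))).coeff (Fintype.card ι - d) =
      (-1) ^ d * MvPolynomial.eval a (MvPolynomial.esymm ι R d) := by
  have hcard : Multiset.card (univ.val.map a) = Fintype.card ι := by simp
  have hesymm : MvPolynomial.eval a (MvPolynomial.esymm ι R d) = (univ.val.map a).esymm d :=
    MvPolynomial.aeval_esymm_eq_multiset_esymm ι R d a
  have hprod : univ.val.map (fun i => X - C (a i)) = (univ.val.map a).map fun t => X - C t := by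
    rw [Multiset.map_map]
    rfl
  rw [hesymm, prod_eq_multiset_prod, hprod, Multiset.prod_X_sub_C_coeff _ (by omega), hcard,
    Nat.sub_sub_self hd]

end Polynomial

theorem gPoly_eq {k : ℕ} (n : Fin k → ℝ) :
    gPoly n = ((k : ℝ) + 1) • ∏ i, (X - C (n i - 2)) -
      (X + C 2) * derivative (∏ i, (X - C (n i - 2))) := by
  have h := sum_C_add_mul_prod_erase (fun i => n i - 2) 2
  simp only [sub_add_cancel, Fintype.card_fin] at h
  rw [gPoly, h, add_smul, one_smul, ← Nat.cast_smul_eq_nsmul ℝ]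
  abel

theorem coeff_gPoly {k m : ℕ} (hm : m + 1 ≤ k) (n : Fin k → ℝ) :
    (gPoly n).coeff (k - (m + 1)) = (-1) ^ (m + 1) *
      ((m + 2) * MvPolynomial.eval (fun j => n j - 2) (MvPolynomial.esymm (Fin k) ℝ (m + 1)) +
        2 * (k - m) * MvPolynomial.eval (fun j => n j - 2) (MvPolynomial.esymm (Fin k) ℝ m)) := by
  have hcoeff {d : ℕ} (hd : d ≤ k) := coeff_prod_X_sub_C (fun j : Fin k => n j - 2) (d := d)
    (by simpa using hd)
  simp only [Fintype.card_fin] at hcoeff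
  have hsucc : k - (m + 1) + 1 = k - m := by omega
  rw [gPoly_eq, coeff_sub, coeff_smul, coeff_X_add_C_mul_derivative, hsucc, hcoeff hm,
    hcoeff (by omega), Nat.cast_sub hm, smul_eq_mul]
  push_cast
  ring

-- `ξ_{m+1}` as a polynomial in `n`, indexed by `m` to avoid truncated subtraction.
noncomputable def xiPoly (k m : ℕ) : MvPolynomial (Fin k) ℝ :=
  (-1 : ℝ) ^ (m + 1) • ((m + 2 : ℝ) • MvPolynomial.shift 2 (MvPolynomial.esymm (Fin k) ℝ (m + 1)) +
    (2 * (k - m) : ℝ) • MvPolynomial.shift 2 (MvPolynomial.esymm (Fin k) ℝ m))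

theorem eval_xiPoly {k m : ℕ} (hm : m + 1 ≤ k) (n : Fin k → ℝ) :
    MvPolynomial.eval n (xiPoly k m) = (gPoly n).coeff (k - (m + 1)) := by
  rw [coeff_gPoly hm]
  simp only [xiPoly, MvPolynomial.smul_eval, map_add, MvPolynomial.eval_shift]

open MvPolynomial in
theorem xiPoly_sub_smul_psum_mem (k m : ℕ) :
    xiPoly k m - (-((m + 2) / (m + 1)) : ℝ) • psum (Fin k) ℝ (m + 1) ∈
      psumAdjoin (Fin k) ℝ m := by
  have h := add_mem
    (Subalgebra.smul_mem _ (shift_esymm_succ_sub_smul_psum_mem 2 m) ((-1) ^ (m + 1) * (m + 2) : ℝ))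
    (Subalgebra.smul_mem _ (shift_mem_psumAdjoin 2 (esymm_mem_psumAdjoin (σ := Fin k) m))
      ((-1) ^ (m + 1) * (2 * (k - m)) : ℝ))
  have hc : (-((m + 2) / (m + 1)) : ℝ) = (-1) ^ (m + 1) * (m + 2) * ((-1) ^ m / (m + 1)) := by
    have hsq : ((-1 : ℝ) ^ m) ^ 2 = 1 := by rw [← pow_mul, mul_comm, pow_mul, neg_one_sq, one_pow]
    field_simp
    linear_combination hsq
  rw [hc]
  convert h using 1
  simp only [xiPoly]
  module

/-- Writing `ξ_i` as a polynomial in the power sums `ψ₁, …, ψ_i`, it is linear in `ψ_i`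
with a nonzero constant coefficient: `ξ_i = c_i ψ_i + G(ψ₁, …, ψ_{i-1})`. -/
theorem xi_linear_in_top_psum (k i : ℕ) (hi : 1 ≤ i) (hik : i ≤ k) :
    ∃ c : ℝ, c ≠ 0 ∧ ∃ G : MvPolynomial (Fin (i - 1)) ℝ, ∀ n : Fin k → ℝ,
      (gPoly n).coeff (k - i) =
        c * (∑ j, n j ^ i) +
          MvPolynomial.eval (fun t : Fin (i - 1) => ∑ j, n j ^ (t.val + 1)) G := by
  obtain ⟨m, rfl⟩ : ∃ m, i = m + 1 := ⟨i - 1, by omega⟩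
  obtain ⟨G, hG⟩ := MvPolynomial.exists_eval_eq_of_mem_psumAdjoin (xiPoly_sub_smul_psum_mem k m)
  refine ⟨-((m + 2) / (m + 1)), neg_ne_zero.mpr (by positivity), G, fun n => ?_⟩
  have hGn := hG n
  simp only [map_sub, eval_xiPoly hik, MvPolynomial.smul_eval, MvPolynomial.psum, map_sum,
    map_pow, MvPolynomial.eval_X] at hGn
  exact eq_add_of_sub_eq' hGn
end

section
/- Let G be a connected graph on n vertices whose distance matrix D(G) has smallest eigenvalue equal to -2 with multiplicity n - k, where 2 ≤ k ≤ n - 1. Then G is a complete k-partite graph. -/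
/-!
The spectral conditions say that `B = D + 2I` is positive semidefinite of rank `k`.
Evaluating the quadratic form of `B` at `e_u - e_v` gives `4 - 2 d(u, v) ≥ 0`, so `G` has
diameter at most `2`; for non-adjacent `u ≠ v` the form vanishes, so `e_u - e_v` lies in the
kernel of `B` and the columns of `u` and `v` agree, which makes non-adjacency transitive.
Hence `G` is complete multipartite and `B` is the blow-up of `I + J` along its parts; as `I + J`
is invertible, the rank `k` of `B` is the number of parts.
-/

open Polynomial Matrix
open scoped ComplexOrder

namespace Matrix

variable {n : Type*} [Fintype n] [DecidableEq n]

theorem charpoly_add_scalar {R : Type*} [CommRing R] (M : Matrix n n R) (μ : R) :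
    (M + scalar n μ).charpoly = M.charpoly.comp (X + C (-μ)) := by
  rw [← sub_neg_eq_add, ← map_neg]
  exact charpoly_sub_scalar M (-μ)

namespace IsHermitian

variable {𝕜 : Type*} [RCLike 𝕜] {A : Matrix n n 𝕜}

theorem rootMultiplicity_charpoly (hA : A.IsHermitian) (μ : ℝ) :
    A.charpoly.rootMultiplicity (μ : 𝕜) = Fintype.card {i // hA.eigenvalues i = μ} := by
  classical
  rw [← count_roots, hA.roots_charpoly_eq_eigenvalues, Multiset.count_map, Fintype.card_subtype]
  simp [Finset.filter, eq_comm]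

theorem rank_eq_card_sub_rootMultiplicity_zero (hA : A.IsHermitian) :
    A.rank = Fintype.card n - A.charpoly.rootMultiplicity 0 := by
  have h := hA.rootMultiplicity_charpoly 0
  rw [RCLike.ofReal_zero] at h
  rw [hA.rank_eq_card_non_zero_eigs, h, Fintype.card_subtype_compl]

theorem isRoot_charpoly_eigenvalues (hA : A.IsHermitian) (i : n) :
    A.charpoly.IsRoot (hA.eigenvalues i : 𝕜) := by
  rw [hA.charpoly_eq, IsRoot, eval_prod]
  exact Finset.prod_eq_zero (Finset.mem_univ i) (by simp)

theorem posSemidef_of_isRoot_charpoly_nonneg (hA : A.IsHermitian)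
    (h : ∀ μ : ℝ, A.charpoly.IsRoot (μ : 𝕜) → 0 ≤ μ) : A.PosSemidef :=
  hA.posSemidef_iff_eigenvalues_nonneg.mpr fun i => h _ (hA.isRoot_charpoly_eigenvalues i)

end IsHermitian

namespace PosSemidef

variable {A : Matrix n n ℝ}

private theorem dotProduct_mulVec_single_sub_single (hA : A.PosSemidef) (u v : n) :
    (Pi.single u 1 - Pi.single v 1 : n → ℝ) ⬝ᵥ A *ᵥ (Pi.single u 1 - Pi.single v 1) =
      A u u + A v v - 2 * A u v := by
  have hvu : A v u = A u v := by rw [← hA.isHermitian.apply v u, star_trivial]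
  simp only [mulVec_sub, mulVec_single, MulOpposite.op_one, one_smul, dotProduct_sub,
    sub_dotProduct, single_dotProduct, col_apply, one_mul, hvu]
  ring

theorem two_mul_apply_le (hA : A.PosSemidef) (u v : n) : 2 * A u v ≤ A u u + A v v := by
  have := hA.dotProduct_mulVec_nonneg (Pi.single u 1 - Pi.single v 1)
  rw [star_trivial, hA.dotProduct_mulVec_single_sub_single] at this
  linarith

theorem apply_eq_of_two_mul_apply_eq (hA : A.PosSemidef) {u v : n}
    (h : 2 * A u v = A u u + A v v) (w : n) : A w u = A w v := by
  have hzero := (hA.dotProduct_mulVec_zero_iff (Pi.single u 1 - Pi.single v 1)).mp (by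
    rw [star_trivial, hA.dotProduct_mulVec_single_sub_single]
    linarith)
  simpa [mulVec_sub, sub_eq_zero] using congrFun hzero w

end PosSemidef

theorem det_one_add_of_one {R : Type*} [CommRing R] :
    (1 + of fun _ _ => (1 : R) : Matrix n n R).det = 1 + Fintype.card n := by
  have : (of fun _ _ => (1 : R) : Matrix n n R) =
      replicateCol Unit (fun _ => (1 : R)) * replicateRow Unit (fun _ => (1 : R)) := by
    ext; simp [mul_apply]
  rw [this, det_one_add_replicateCol_mul_replicateRow]
  simp [dotProduct]

theorem rank_submatrix_of_isUnit {m Q R : Type*} [Fintype m] [Fintype Q] [DecidableEq Q]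
    [Field R] {K : Matrix Q Q R} (hK : IsUnit K) {p : m → Q} (hp : p.Surjective) :
    (K.submatrix p p).rank = Fintype.card Q := by
  refine le_antisymm ((rank_submatrix_le K p p).trans (rank_le_card_width K)) ?_
  calc Fintype.card Q = K.rank := (rank_of_isUnit K hK).symm
    _ = ((K.submatrix p p).submatrix (Function.surjInv hp) (Function.surjInv hp)).rank := by
      simp only [submatrix_submatrix, Function.comp_def, Function.surjInv_eq hp]
      rfl
    _ ≤ (K.submatrix p p).rank := rank_submatrix_le _ _ _

end Matrix

namespace SimpleGraph

variable {V : Type*} {G : SimpleGraph V}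

noncomputable def distMatrix (G : SimpleGraph V) : Matrix V V ℝ := of fun u v => (G.dist u v : ℝ)

theorem distMatrix_isHermitian (G : SimpleGraph V) : G.distMatrix.IsHermitian := by
  ext u v
  simp [distMatrix, dist_comm]

variable [Fintype V]

theorem IsCompleteMultipartite.rank_ite_adj_one_two [DecidableRel G.Adj]
    (h : G.IsCompleteMultipartite) [Fintype (Quotient h.setoid)] :
    (of fun u v => if G.Adj u v then (1 : ℝ) else 2).rank = Fintype.card (Quotient h.setoid) := by
  classical
  have hK : IsUnit (1 + of fun _ _ => (1 : ℝ) :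
      Matrix (Quotient h.setoid) (Quotient h.setoid) ℝ) := by
    rw [isUnit_iff_isUnit_det, det_one_add_of_one, isUnit_iff_ne_zero]
    positivity
  rw [← rank_submatrix_of_isUnit hK Quotient.mk_surjective]
  congr 1
  ext u v
  have hmk : (⟦u⟧ : Quotient h.setoid) = ⟦v⟧ ↔ ¬ G.Adj u v := Quotient.eq
  by_cases huv : G.Adj u v
  · simp [huv, hmk, one_apply]
  · norm_num [huv, hmk.mpr huv]

variable [DecidableEq V]

theorem distMatrix_add_scalar_apply (u v : V) :
    (G.distMatrix + scalar V (2 : ℝ)) u v = G.dist u v + if u = v then 2 else 0 := by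
  by_cases h : u = v <;> simp [distMatrix, h]

section PosSemidef

variable (hB : (G.distMatrix + scalar V (2 : ℝ)).PosSemidef)
include hB

theorem dist_le_two_of_posSemidef (u v : V) : G.dist u v ≤ 2 := by
  rcases eq_or_ne u v with rfl | huv
  · simp
  have h := hB.two_mul_apply_le u v
  simp only [distMatrix_add_scalar_apply, dist_self, huv, if_true, if_false] at h
  exact_mod_cast (by push_cast at h; linarith : (G.dist u v : ℝ) ≤ 2)

theorem dist_eq_two_of_not_adj (hG : G.Connected) {u v : V} (huv : u ≠ v) (h : ¬ G.Adj u v) :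
    G.dist u v = 2 := by
  have h0 : G.dist u v ≠ 0 := fun h0 => huv (hG.dist_eq_zero_iff.mp h0)
  have h1 : G.dist u v ≠ 1 := fun h1 => h (dist_eq_one_iff_adj.mp h1)
  have := dist_le_two_of_posSemidef hB u v
  omega

theorem distMatrix_add_scalar_eq_of_posSemidef [DecidableRel G.Adj] (hG : G.Connected) :
    G.distMatrix + scalar V (2 : ℝ) = of fun u v => if G.Adj u v then 1 else 2 := by
  ext u v
  rw [distMatrix_add_scalar_apply, of_apply]
  by_cases huv : u = v
  · simp [huv]
  by_cases h : G.Adj u v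
  · simp [huv, h, dist_eq_one_iff_adj.mpr h]
  · simp [huv, h, dist_eq_two_of_not_adj hB hG huv h]

theorem isCompleteMultipartite_of_posSemidef (hG : G.Connected) : G.IsCompleteMultipartite := by
  classical
  refine ⟨fun u v w huv hvw huw => ?_⟩
  rcases eq_or_ne u v with rfl | hne
  · exact hvw huw
  have hB' := distMatrix_add_scalar_eq_of_posSemidef hB hG ▸ hB
  have hcol := hB'.apply_eq_of_two_mul_apply_eq (u := u) (v := v) (by norm_num [huv]) w
  have hwv : ¬ G.Adj w v := fun h => hvw h.symm
  simp [huw.symm, hwv] at hcol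

end PosSemidef

end SimpleGraph

theorem completeMultipartite_of_dist_eigenvalue_general {V : Type*} [Fintype V] [DecidableEq V]
    (G : SimpleGraph V) (hG : G.Connected) (k : ℕ)
    (hk1 : k ≤ Fintype.card V - 1)
    (D : Matrix V V ℝ) (hD : D = Matrix.of fun u v => (G.dist u v : ℝ))
    (hmult : D.charpoly.rootMultiplicity (-2) = Fintype.card V - k)
    (hmin : ∀ μ : ℝ, D.charpoly.IsRoot μ → -2 ≤ μ) :
    ∃ P : V → Fin k, Function.Surjective P ∧ ∀ u v, G.Adj u v ↔ P u ≠ P v := by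
  classical
  replace hD : D = G.distMatrix := hD
  subst hD
  have hherm : (G.distMatrix + scalar V (2 : ℝ)).IsHermitian :=
    G.distMatrix_isHermitian.add (isHermitian_diagonal _)
  have hchar := G.distMatrix.charpoly_add_scalar (2 : ℝ)
  have hpsd : (G.distMatrix + scalar V (2 : ℝ)).PosSemidef :=
    hherm.posSemidef_of_isRoot_charpoly_nonneg fun μ hμ => by
      rw [hchar, IsRoot, eval_comp] at hμ
      have := hmin (μ - 2) (by simpa [sub_eq_add_neg] using hμ)
      linarith
  have hrank : (G.distMatrix + scalar V (2 : ℝ)).rank = k := by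
    rw [rootMultiplicity_eq_rootMultiplicity, ← hchar] at hmult
    rw [hherm.rank_eq_card_sub_rootMultiplicity_zero, hmult]
    omega
  have hcm := G.isCompleteMultipartite_of_posSemidef hpsd hG
  have hcard : Fintype.card (Quotient hcm.setoid) = k := by
    rw [← hcm.rank_ite_adj_one_two, ← G.distMatrix_add_scalar_eq_of_posSemidef hpsd hG, hrank]
  let e := Fintype.equivFinOfCardEq hcard
  refine ⟨e ∘ Quotient.mk _, e.surjective.comp Quotient.mk_surjective, fun u v => ?_⟩
  simp only [Function.comp_apply, ne_eq, e.apply_eq_iff_eq, Quotient.eq]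
  exact not_not.symm

/-- If the distance matrix of a connected graph `G` on `n` vertices has smallest
eigenvalue `-2` with multiplicity `n - k`, `2 ≤ k ≤ n - 1`, then `G` is a complete
`k`-partite graph. -/
theorem completeMultipartite_of_dist_eigenvalue {V : Type*} [Fintype V] [DecidableEq V]
    (G : SimpleGraph V) (hG : G.Connected) (k : ℕ) (hk2 : 2 ≤ k)
    (hk1 : k ≤ Fintype.card V - 1)
    (D : Matrix V V ℝ) (hD : D = Matrix.of fun u v => (G.dist u v : ℝ))
    (hmult : D.charpoly.rootMultiplicity (-2) = Fintype.card V - k)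
    (hmin : ∀ μ : ℝ, D.charpoly.IsRoot μ → -2 ≤ μ) :
    ∃ P : V → Fin k, Function.Surjective P ∧ ∀ u v, G.Adj u v ↔ P u ≠ P v :=
  completeMultipartite_of_dist_eigenvalue_general G hG k hk1 D hD hmult hmin
end

section
/- The determinant of the distance matrix of any tree on n ≥ 2 vertices equals (-1)^{n-1} (n-1) 2^{n-2}, independent of the structure of the tree. -/
/-!
Delete a leaf `u` with neighbour `w`. Subtracting row and column `w` from row and column `u`
of `D + t J` leaves `-2` in the corner and `1` elsewhere in row and column `u`, while the
rest of the matrix is the distance matrix of the smaller tree plus `t J`. Pivoting on the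
corner gives `det (D + t J) = -2 det (D' + (t + 1/2) J)`, and induction on the number of
vertices yields `det (D + t J) = (-2)^(n-1) (t + (n-1)/2)`; put `t = 0`.
-/

open Matrix

namespace Matrix

variable {K V : Type*} [Field K] [Fintype V] [DecidableEq V]

theorem det_eq_mul_det_compl_singleton_of_ne_zero (A : Matrix V V K) (u : V) (hu : A u u ≠ 0) :
    A.det = A u u *
      (of fun x y : ({u}ᶜ : Set V) => A x y - A x u * A u y / A u u).det := by
  set c : V → K := fun x => if x = u then 0 else -(A x u / A u u)
  set B : Matrix V V K := of fun x y => A x y + c x * A u y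
  have hAB : B.det = A.det := det_eq_of_forall_row_eq_smul_add_const c u (if_pos rfl) fun _ _ => rfl
  have hB : ∀ x ≠ u, B x u = 0 := fun x hx => by simp [B, c, hx, hu]
  rw [← hAB, twoBlockTriangular_det B (· = u) fun x hx y hy => hy ▸ hB x hx]
  congr 1
  · simp only [det_unique]
    simp [B, c, toSquareBlockProp, toBlock, (default : {x // x = u}).2]
  · congr 1
    ext x y
    have hx : (x : V) ≠ u := x.2
    -- the index types `{x // ¬x = u}` and `↥{u}ᶜ` agree only up to unfolding
    show B x y = A x y - A x u * A u y / A u u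
    simp only [B, c, of_apply, if_neg hx]
    ring

theorem det_add_const_eq_of_leaf [NeZero (2 : K)] (d : V → V → K) {u w : V} (hwu : w ≠ u)
    (hu : d u u = 0) (hw : d w w = 0) (hrow : ∀ y ≠ u, d u y = d w y + 1)
    (hcol : ∀ x ≠ u, d x u = d x w + 1) (t : K) :
    (of fun x y => d x y + t).det =
      -2 * (of fun x y : ({u}ᶜ : Set V) => d x y + (t + 1 / 2)).det := by
  set M : Matrix V V K := of fun x y => d x y + t
  set M₁ := M.updateRow u (M u + (-1 : K) • M w)
  set M₂ := M₁.updateCol u fun x => M₁ x u + (-1 : K) • M₁ x w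
  have hdet : M₂.det = M.det := by
    rw [det_updateCol_add_smul_self _ hwu.symm, det_updateRow_add_smul_self _ hwu.symm]
  have huw : d u w = 1 := by rw [hrow w hwu, hw, zero_add]
  have hwu' : d w u = 1 := by rw [hcol w hwu, hw, zero_add]
  have h₂uu : M₂ u u = -2 := by
    norm_num [M₂, M₁, M, hu, hw, huw, hwu']
  have h₂xu : ∀ x ≠ u, M₂ x u = 1 := fun x hx => by
    simp [M₂, M₁, M, hx, hcol x hx]
  have h₂uy : ∀ y ≠ u, M₂ u y = 1 := fun y hy => by
    simp [M₂, M₁, M, hy, hrow y hy]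
  have h₂xy : ∀ x ≠ u, ∀ y ≠ u, M₂ x y = d x y + t := fun x hx y hy => by
    simp [M₂, M₁, M, hx, hy]
  rw [← hdet, det_eq_mul_det_compl_singleton_of_ne_zero M₂ u (by simp [h₂uu, two_ne_zero]),
    h₂uu]
  congr 2
  ext x y
  rw [of_apply, of_apply, h₂xy x x.2 y y.2, h₂xu x x.2, h₂uy y y.2, one_mul, div_neg,
    sub_neg_eq_add, add_assoc]

end Matrix

namespace SimpleGraph

variable {V : Type*} {G : SimpleGraph V}

theorem Preconnected.dist_eq_dist_add_one_of_neighborSet_subsingleton (hG : G.Preconnected)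
    {u w v : V} (huw : G.Adj u w) (hu : (G.neighborSet u).Subsingleton) (hv : v ≠ u) :
    G.dist u v = G.dist w v + 1 := by
  refine le_antisymm ?_ ?_
  · rw [dist_comm, dist_comm (u := w)]
    simpa [dist_eq_one_iff_adj.mpr huw.symm] using (hG v w).dist_triangle_left u
  · obtain ⟨p, hp⟩ := (hG u v).exists_walk_length_eq_dist
    obtain ⟨x, hux, q, rfl⟩ := Walk.exists_eq_cons_of_ne hv.symm p
    obtain rfl : x = w := hu hux huw
    simpa [← hp] using dist_le q

theorem Preconnected.dist_induce_eq (hG : G.Preconnected) {s : Set V}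
    (hs : ∀ v ∉ s, (G.neighborSet v).Subsingleton) (a b : s) :
    (G.induce s).dist a b = G.dist a b := by
  refine le_antisymm ?_ ?_
  · obtain ⟨p, hp, hlen⟩ := (hG a b).exists_path_of_dist
    have hps : ∀ x ∈ p.support, x ∈ s := fun x hx => by
      by_contra hxs
      exact hp.isTrail.not_mem_support_of_subsingleton_neighborSet (by rintro rfl; exact hxs a.2)
        (by rintro rfl; exact hxs b.2) (hs x hxs) hx
    calc (G.induce s).dist a b ≤ (p.induce s hps).length := dist_le _
      _ = p.length := (Walk.length_map _ _).symm.trans (congrArg Walk.length (p.map_induce hps))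
      _ = G.dist a b := hlen
  · obtain ⟨q, hq⟩ := ((hG.induce_of_degree_eq_one hs) a b).exists_walk_length_eq_dist
    calc G.dist a b ≤ (q.map (Embedding.induce s).toHom).length := dist_le _
      _ = (G.induce s).dist a b := by rw [Walk.length_map, hq]

theorem IsTree.det_dist_add_const [Fintype V] [DecidableEq V] (hG : G.IsTree) (t : ℝ) :
    (of fun a b => (G.dist a b : ℝ) + t).det =
      (-2) ^ (Fintype.card V - 1) * (t + ((Fintype.card V : ℝ) - 1) / 2) := by
  obtain ⟨n, hn⟩ : ∃ n, Fintype.card V = n + 1 :=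
    Nat.exists_eq_add_one.mpr (Fintype.card_pos_iff.mpr hG.connected.nonempty)
  induction n generalizing V t with
  | zero =>
    obtain ⟨_⟩ := Fintype.card_eq_one_iff_nonempty_unique.mp hn
    simp [det_unique]
  | succ n ih =>
    have : Nontrivial V := Fintype.one_lt_card_iff_nontrivial.mp (by omega)
    classical
    obtain ⟨u, hu⟩ := hG.exists_vert_degree_one_of_nontrivial
    obtain ⟨w, huw, huniq⟩ := degree_eq_one_iff_existsUnique_adj.mp hu
    have hleaf : (G.neighborSet u).Subsingleton := fun x hx y hy =>
      (huniq x hx).trans (huniq y hy).symm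
    have hdist : ∀ v ≠ u, G.dist u v = G.dist w v + 1 := fun v hv =>
      hG.connected.preconnected.dist_eq_dist_add_one_of_neighborSet_subsingleton huw hleaf hv
    have hT : (G.induce {u}ᶜ).IsTree :=
      ⟨hG.connected.induce_compl_singleton_of_degree_eq_one hu, hG.isAcyclic.induce _⟩
    have hcard : Fintype.card ({u}ᶜ : Set V) = n + 1 := by
      rw [Fintype.card_compl_set]
      simp [hn]
    have hind : (of fun x y : ({u}ᶜ : Set V) => (G.dist x y : ℝ) + (t + 1 / 2)) =
        of fun x y => ((G.induce {u}ᶜ).dist x y : ℝ) + (t + 1 / 2) := by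
      ext x y
      rw [of_apply, of_apply, hG.connected.preconnected.dist_induce_eq (by simpa using hleaf)]
    rw [det_add_const_eq_of_leaf (fun a b => (G.dist a b : ℝ)) huw.ne.symm (by simp) (by simp)
      (fun y hy => by simp [hdist y hy]) (fun x hx => by simp [dist_comm, hdist x hx]), hind,
      ih hT _ hcard, hcard, hn]
    simp only [Nat.add_sub_cancel]
    push_cast
    ring

end SimpleGraph

/-- Graham–Pollak: the determinant of the distance matrix of any tree on `n ≥ 2`
vertices is `(-1)^(n-1) (n-1) 2^(n-2)`. -/
theorem tree_distance_matrix_det {V : Type*} [Fintype V] [DecidableEq V]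
    (G : SimpleGraph V) (hG : G.IsTree) (hn : 2 ≤ Fintype.card V) :
    (Matrix.of fun u v => (G.dist u v : ℝ)).det =
      (-1 : ℝ) ^ (Fintype.card V - 1) * (Fintype.card V - 1) *
        2 ^ (Fintype.card V - 2) := by
  obtain ⟨k, hk⟩ : ∃ k, Fintype.card V = k + 2 := ⟨Fintype.card V - 2, by omega⟩
  have h := hG.det_dist_add_const 0
  simp only [add_zero, zero_add] at h
  rw [h, hk, show k + 2 - 1 = k + 1 by omega, show k + 2 - 2 = k by omega, neg_pow]
  push_cast
  ring
end
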